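/- arXiv:1307.3050 — 3 statements merged into one kernel-verified Lean document; each statement's English description precedes it below -/
import Mathlib

section
/- Let G be a finite simple graph on [n] and order the minimal monomial generators m_S of the monomial ideal of independent sets I as m_1 ≻ m_2 ≻ ... (decreasing in the order: m_i ≻ m_j iff deg_s(m_i) < deg_s(m_j), or deg_s(m_i) = deg_s(m_j) and the s-part of m_i is lexicographically larger). Then for every i > 1, the colon ideal (m_1,...,m_{i-1}) : (m_i) equals the ideal generated by the variables t_r with r ∈ S_i, where m_i corresponds to the independent set S_i. In particular, I has linear quotients. -/
/-!
All ideals involved are monomial ideals, so membership is read off exponents: `f` lies in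
`(m_{S'} : S' ≺ S) : m_S` iff every monomial `c` of `f` has `m_{S'} ∣ c · m_S` for some `S' ≺ S`.
Such an `S'` never contains `S` (it is smaller, or of the same size and different), so it misses
some `r ∈ S`; then `t_r ∣ m_{S'}` but `t_r ∤ m_S`, hence `t_r ∣ c`. Conversely
`t_r · m_S = s_r · m_{S \ {r}}` for `r ∈ S`, and `S \ {r}` is independent and precedes `S`.
-/

open MvPolynomial

/-- A set `S` of vertices is independent in `G` if no two of its elements are adjacent. -/
def IsIndepSet {V : Type*} (G : SimpleGraph V) (S : Finset V) : Prop :=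
  ∀ i ∈ S, ∀ j ∈ S, ¬ G.Adj i j

/-- The monomial `m_S = ∏_{i ∈ S} s_i · ∏_{i ∉ S} t_i` in
`T = K[s_i, t_i : i ∈ [n]]`, where the variable `s_i` is `X (Sum.inl i)` and
`t_i` is `X (Sum.inr i)`. -/
noncomputable def mS (K : Type*) [Field K] {n : ℕ} (S : Finset (Fin n)) :
    MvPolynomial (Fin n ⊕ Fin n) K :=
  (∏ i ∈ S, X (Sum.inl i)) * (∏ i ∈ Sᶜ, X (Sum.inr i))

/-- The monomial ideal of independent sets of the graph `G`. -/
noncomputable def indepIdeal (K : Type*) [Field K] {n : ℕ} (G : SimpleGraph (Fin n)) :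
    Ideal (MvPolynomial (Fin n ⊕ Fin n) K) :=
  Ideal.span {m | ∃ S : Finset (Fin n), IsIndepSet G S ∧ m = mS K S}

/-- The s-part of `m_{S'}` is lexicographically larger than the s-part of `m_S`
(with `s_1 > s_2 > ⋯ > s_n`): at the first index where `S'` and `S` differ, that
index belongs to `S'`. -/
def LexGT {n : ℕ} (S' S : Finset (Fin n)) : Prop :=
  ∃ r : Fin n, r ∈ S' ∧ r ∉ S ∧ ∀ q : Fin n, q < r → (q ∈ S' ↔ q ∈ S)

/-- `m_{S'} ≻ m_S` in the order used for linear quotients: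
`deg_s(m_{S'}) < deg_s(m_S)`, or the s-degrees agree and `m_{S'} >_lex m_S`. -/
def Prec {n : ℕ} (S' S : Finset (Fin n)) : Prop :=
  S'.card < S.card ∨ (S'.card = S.card ∧ LexGT S' S)

namespace MvPolynomial

variable {σ R : Type*} [CommSemiring R]

theorem mem_colon_span_monomial_iff {s : Set (σ →₀ ℕ)} {d : σ →₀ ℕ} {f : MvPolynomial σ R} :
    f ∈ (Ideal.span ((fun e => monomial e (1 : R)) '' s)).colon
        (Ideal.span {monomial d (1 : R)}) ↔ ∀ c ∈ f.support, ∃ e ∈ s, e ≤ c + d := by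
  rw [Ideal.mem_colon_span_singleton, mem_ideal_span_monomial_image]
  constructor
  · intro h c hc
    apply h
    rwa [mem_support_iff, coeff_mul_monomial, mul_one, ← mem_support_iff]
  · intro h m hm
    rw [mem_support_iff, coeff_mul_monomial'] at hm
    split_ifs at hm with hdm
    · obtain ⟨e, he, hle⟩ := h (m - d) (mem_support_iff.2 (by simpa using hm))
      exact ⟨e, he, tsub_add_cancel_of_le hdm ▸ hle⟩
    · exact absurd rfl hm

end MvPolynomial

theorem IsIndepSet.mono {V : Type*} {G : SimpleGraph V} {S T : Finset V} (hS : IsIndepSet G S)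
    (hTS : T ⊆ S) : IsIndepSet G T :=
  fun i hi j hj => hS i (hTS hi) j (hTS hj)

theorem Prec.not_subset {n : ℕ} {S' S : Finset (Fin n)} (h : Prec S' S) : ¬S ⊆ S' := by
  intro hsub
  rcases h with h | ⟨hcard, r, hrS', hrS, -⟩
  · exact (Finset.card_le_card hsub).not_gt h
  · exact hrS (Finset.eq_of_subset_of_card_le hsub hcard.le ▸ hrS')

noncomputable def eS {n : ℕ} (S : Finset (Fin n)) : (Fin n ⊕ Fin n) →₀ ℕ :=
  (∑ i ∈ S, Finsupp.single (Sum.inl i) 1) + ∑ i ∈ Sᶜ, Finsupp.single (Sum.inr i) 1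

theorem eS_apply_inr {n : ℕ} (S : Finset (Fin n)) (i : Fin n) :
    eS S (Sum.inr i) = if i ∈ S then 0 else 1 := by
  simp [eS, Finsupp.single_apply]

section

variable (K : Type*) [Field K] {n : ℕ}

theorem mS_eq_monomial (S : Finset (Fin n)) : mS K S = monomial (eS S) 1 := by
  simp only [mS, eS, X, ← monomial_sum_one, monomial_mul, one_mul]

theorem X_inr_mul_mS {S : Finset (Fin n)} {r : Fin n} (hr : r ∈ S) :
    X (Sum.inr r) * mS K S = X (Sum.inl r) * mS K (S.erase r) := by
  rw [mS, mS, Finset.compl_erase, Finset.prod_insert (by simpa using hr),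
    ← Finset.mul_prod_erase S _ hr]
  ring

variable (G : SimpleGraph (Fin n))

/-- The ideal `(m_1, …, m_{i-1})` when `m_i = m_S`. -/
noncomputable def precIdeal (S : Finset (Fin n)) : Ideal (MvPolynomial (Fin n ⊕ Fin n) K) :=
  Ideal.span {m | ∃ S', IsIndepSet G S' ∧ Prec S' S ∧ m = mS K S'}

theorem precIdeal_eq_span_monomial (S : Finset (Fin n)) :
    precIdeal K G S =
      Ideal.span ((fun e => monomial e 1) '' (eS '' {S' | IsIndepSet G S' ∧ Prec S' S})) := by
  rw [precIdeal]
  congr 1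
  ext m
  simp [mS_eq_monomial, eq_comm, and_assoc]

theorem X_inr_mem_colon_precIdeal {S : Finset (Fin n)} (hS : IsIndepSet G S) {r : Fin n}
    (hr : r ∈ S) : X (Sum.inr r) ∈ (precIdeal K G S).colon (Ideal.span {mS K S}) := by
  rw [Ideal.mem_colon_span_singleton, X_inr_mul_mS K hr]
  refine Ideal.mul_mem_left _ _ (Ideal.subset_span ⟨S.erase r, ?_, ?_, rfl⟩)
  · exact hS.mono (Finset.erase_subset r S)
  · exact Or.inl (Finset.card_erase_lt_of_mem hr)

theorem colon_precIdeal_le (S : Finset (Fin n)) :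
    (precIdeal K G S).colon (Ideal.span {mS K S}) ≤
      Ideal.span ((fun r => X (Sum.inr r)) '' S) := by
  intro f hf
  rw [precIdeal_eq_span_monomial, mS_eq_monomial, mem_colon_span_monomial_iff] at hf
  rw [← Set.image_image X Sum.inr, mem_ideal_span_X_image]
  intro c hc
  obtain ⟨_, ⟨S', ⟨-, hprec⟩, rfl⟩, hle⟩ := hf c hc
  obtain ⟨r, hrS, hrS'⟩ := Finset.not_subset.1 hprec.not_subset
  refine ⟨Sum.inr r, Set.mem_image_of_mem _ hrS, ?_⟩
  have := hle (Sum.inr r)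
  simp only [Finsupp.add_apply, eS_apply_inr, if_pos hrS, if_neg hrS'] at this
  omega

end

theorem indepIdeal_linear_quotients_general (K : Type*) [Field K] {n : ℕ}
    (G : SimpleGraph (Fin n)) (S : Finset (Fin n)) (hS : IsIndepSet G S) :
    (Ideal.span {m | ∃ S' : Finset (Fin n),
        IsIndepSet G S' ∧ Prec S' S ∧ m = mS K S'}).colon (Ideal.span {mS K S}) =
      Ideal.span ((fun r => (X (Sum.inr r) : MvPolynomial (Fin n ⊕ Fin n) K)) '' S) :=
  le_antisymm (colon_precIdeal_le K G S) <| Ideal.span_le.2 <| by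
    rintro _ ⟨r, hr, rfl⟩
    exact X_inr_mem_colon_precIdeal K G hS hr

/-- ordering the generators `m_S` decreasingly in `≻`, each colon ideal
`(m_1, …, m_{i-1}) : (m_i)` equals `(t_r : r ∈ S_i)`; in particular the monomial
ideal of independent sets has linear quotients. -/
theorem indepIdeal_linear_quotients (K : Type*) [Field K] {n : ℕ}
    (G : SimpleGraph (Fin n)) (S : Finset (Fin n)) (hS : IsIndepSet G S)
    (hne : S.Nonempty) :
    (Ideal.span {m | ∃ S' : Finset (Fin n),
        IsIndepSet G S' ∧ Prec S' S ∧ m = mS K S'}).colon (Ideal.span {mS K S}) =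
      Ideal.span ((fun r => (X (Sum.inr r) : MvPolynomial (Fin n ⊕ Fin n) K)) '' S) :=
  indepIdeal_linear_quotients_general K G S hS
end

section
/- For the centipede graph W_n (n ≥ 1), the number of independent sets of cardinality k is s_k = Σ_{j=0}^{k} C(n−j, n−k)·C(n+1−j, j) for 0 ≤ k ≤ n, and the independence number of W_n is n. -/
open Classical in
/-- The number of independent sets of cardinality `k` in `G`. -/
noncomputable def numIndep {V : Type*} [Fintype V] (G : SimpleGraph V) (k : ℕ) : ℕ :=
  (Finset.univ.filter fun S : Finset V => IsIndepSet G S ∧ S.card = k).card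

open Classical in
/-- The independence number `α(G)`: the maximal cardinality of an independent set. -/
noncomputable def indepNum {V : Type*} [Fintype V] (G : SimpleGraph V) : ℕ :=
  (Finset.univ.filter fun S : Finset V => IsIndepSet G S).sup Finset.card

/-- The centipede graph `W_n`: vertices `a_1, …, a_n` (left) and `b_1, …, b_n`
(right), with edges `{a_i, b_i}` and `{b_j, b_{j+1}}`. -/
def centipede (n : ℕ) : SimpleGraph (Fin n ⊕ Fin n) :=
  SimpleGraph.fromRel (fun u v =>
    match u, v with
    | Sum.inl i, Sum.inr j => i = j
    | Sum.inr i, Sum.inr j => i.val + 1 = j.val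
    | _, _ => False)

/-!
An independent set of `W_n` is a set `B` of spine vertices `b_i`, no two consecutive, together
with any set of legs `a_i` avoiding the indices of `B`. By Kaplansky's lemma there are
`C(n+1-j, j)` such `B` of size `j`, and each extends in `C(n-j, k-j) = C(n-j, n-k)` ways to an
independent set of size `k`. The legs alone form an independent set of size `n`, and no
independent set is larger since it never contains both `a_i` and `b_i`.
-/

open Finset

def NoConsecutive (S : Finset ℕ) : Prop := ∀ x ∈ S, x + 1 ∉ S

instance : DecidablePred NoConsecutive := fun S => by unfold NoConsecutive; infer_instance

lemma noConsecutive_insert_iff {S : Finset ℕ} {n : ℕ} (hS : S ⊆ range (n + 1)) :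
    NoConsecutive (insert (n + 1) S) ↔ NoConsecutive S ∧ S ⊆ range n := by
  simp only [NoConsecutive, subset_iff, mem_insert, mem_range, forall_eq_or_imp]
  grind

lemma card_noConsecutive_of_lt {n j : ℕ} (h : n < j) :
    #{S ∈ (range n).powersetCard j | NoConsecutive S} = (n + 1 - j).choose j := by
  rw [powersetCard_eq_empty.mpr (by simpa using h), Nat.choose_eq_zero_of_lt (by omega)]
  rfl

lemma card_noConsecutive_succ_succ (n j : ℕ) :
    #{S ∈ (range (n + 2)).powersetCard (j + 1) | NoConsecutive S} =
      #{S ∈ (range (n + 1)).powersetCard (j + 1) | NoConsecutive S} +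
        #{S ∈ (range n).powersetCard j | NoConsecutive S} := by
  have hn : n + 1 ∉ range (n + 1) := by simp
  rw [range_add_one, powersetCard_succ_insert hn, filter_union, card_union_of_disjoint,
    filter_image, card_image_of_injOn]
  · congr 2
    ext S
    simp only [mem_filter, mem_powersetCard]
    constructor
    · rintro ⟨⟨hS, hcard⟩, h⟩
      obtain ⟨h, hS'⟩ := (noConsecutive_insert_iff hS).mp h
      exact ⟨⟨hS', hcard⟩, h⟩
    · rintro ⟨⟨hS, hcard⟩, h⟩
      have hS' : S ⊆ range (n + 1) := hS.trans (range_subset_range.mpr n.le_succ)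
      exact ⟨⟨hS', hcard⟩, (noConsecutive_insert_iff hS').mpr ⟨h, hS⟩⟩
  · intro S hS T hT hST
    simp only [mem_coe, mem_filter, mem_powersetCard] at hS hT
    rw [← erase_insert (fun h => hn (hS.1.1 h)), hST, erase_insert (fun h => hn (hT.1.1 h))]
  · refine disjoint_filter_filter (disjoint_left.mpr fun S hS hS' => ?_)
    obtain ⟨T, -, rfl⟩ := mem_image.mp hS'
    exact hn ((mem_powersetCard.mp hS).1 (mem_insert_self _ _))

theorem card_noConsecutive : ∀ n j,
    #{S ∈ (range n).powersetCard j | NoConsecutive S} = (n + 1 - j).choose j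
  | n, 0 => by simp [NoConsecutive, filter_singleton]
  | 0, j + 1 => card_noConsecutive_of_lt (by omega)
  | 1, 1 => by decide
  | 1, j + 2 => card_noConsecutive_of_lt (by omega)
  | n + 2, j + 1 => by
    rcases lt_or_ge (n + 2) (j + 1) with h | h
    · exact card_noConsecutive_of_lt h
    rw [card_noConsecutive_succ_succ, card_noConsecutive (n + 1), card_noConsecutive n,
      show n + 2 + 1 - (j + 1) = n + 1 - j + 1 by omega,
      show n + 1 + 1 - (j + 1) = n + 1 - j by omega, Nat.choose_succ_succ', add_comm]

lemma card_noConsecutive_fin (n j : ℕ) :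
    #{B : Finset (Fin n) | #B = j ∧ NoConsecutive (B.map Fin.valEmbedding)} =
      #{S ∈ (range n).powersetCard j | NoConsecutive S} := by
  rw [← Nat.Iio_eq_range, ← Fin.map_valEmbedding_univ, powersetCard_map, filter_map, card_map]
  congr 1
  ext B
  simp

lemma card_disjoint_toLeft_toRight {α : Type*} [Fintype α] [DecidableEq α]
    {𝓑 : Finset (Finset α)} {j k : ℕ} (h𝓑 : ∀ B ∈ 𝓑, #B = j) (hjk : j ≤ k) :
    #{S : Finset (α ⊕ α) | Disjoint S.toLeft S.toRight ∧ S.toRight ∈ 𝓑 ∧ #S = k} =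
      #𝓑 * (Fintype.card α - j).choose (k - j) := by
  calc _ = #(𝓑.sigma fun B => Bᶜ.powersetCard (k - j)) := by
        refine card_nbij' (fun S => ⟨S.toRight, S.toLeft⟩) (fun p => p.2.disjSum p.1) ?_ ?_
          (fun S _ => toLeft_disjSum_toRight) (fun p _ => by simp)
        · intro S hS
          simp only [coe_filter, Set.mem_ofPred_eq, mem_univ, true_and, mem_coe, mem_sigma,
            mem_powersetCard, subset_compl_iff_disjoint_right] at hS ⊢
          obtain ⟨hd, hB, hk⟩ := hS
          rw [← card_toLeft_add_card_toRight, h𝓑 _ hB] at hk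
          exact ⟨hB, hd, by omega⟩
        · rintro ⟨B, A⟩ hp
          simp only [coe_filter, Set.mem_ofPred_eq, mem_univ, true_and, mem_coe, mem_sigma,
            mem_powersetCard, subset_compl_iff_disjoint_right] at hp ⊢
          obtain ⟨hB, hd, hA⟩ := hp
          simp only [toLeft_disjSum, toRight_disjSum, card_disjSum, hA, h𝓑 _ hB]
          exact ⟨hd, hB, by omega⟩
    _ = _ := by
        rw [card_sigma, sum_const_nat]
        intro B hB
        rw [card_powersetCard, card_compl, h𝓑 B hB]

lemma isIndepSet_centipede_iff {n : ℕ} {S : Finset (Fin n ⊕ Fin n)} :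
    IsIndepSet (centipede n) S ↔
      Disjoint S.toLeft S.toRight ∧ NoConsecutive (S.toRight.map Fin.valEmbedding) := by
  simp only [IsIndepSet, centipede, SimpleGraph.fromRel_adj, ne_eq, not_and, not_or, Sum.forall,
    not_false_eq_true, true_and, Sum.inl.injEq, implies_true, reduceCtorEq, and_true,
    forall_const, Sum.inr.injEq, disjoint_left, mem_toLeft, mem_toRight, NoConsecutive, mem_map,
    Fin.valEmbedding_apply, not_exists, forall_exists_index, and_imp, forall_apply_eq_imp_iff₂]
  grind

theorem numIndep_centipede_eq {n k : ℕ} (hk : k ≤ n) :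
    numIndep (centipede n) k =
      ∑ j ∈ range (k + 1), (n - j).choose (n - k) * (n + 1 - j).choose j := by
  rw [numIndep, card_eq_sum_card_fiberwise (f := fun S => #S.toRight) (t := range (k + 1))]
  · refine sum_congr rfl fun j hj => ?_
    have hjk : j ≤ k := Nat.lt_succ_iff.mp (mem_range.mp hj)
    let 𝓑 : Finset (Finset (Fin n)) := {B | #B = j ∧ NoConsecutive (B.map Fin.valEmbedding)}
    calc _ = #{S : Finset (Fin n ⊕ Fin n) |
              Disjoint S.toLeft S.toRight ∧ S.toRight ∈ 𝓑 ∧ #S = k} := by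
          rw [filter_filter]
          congr 1
          ext S
          simp only [mem_filter, mem_univ, true_and, isIndepSet_centipede_iff, 𝓑]
          tauto
      _ = #𝓑 * (n - j).choose (k - j) := by
          rw [card_disjoint_toLeft_toRight (fun B hB => (mem_filter.mp hB).2.1) hjk,
            Fintype.card_fin]
      _ = _ := by
          rw [card_noConsecutive_fin, card_noConsecutive, mul_comm,
            Nat.choose_symm_of_eq_add (show n - j = k - j + (n - k) by omega)]
  · intro S hS
    simp only [mem_coe, mem_filter, mem_univ, true_and] at hS
    exact mem_range.mpr (Nat.lt_succ_of_le (hS.2 ▸ card_toRight_le))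

lemma card_le_of_isIndepSet_centipede {n : ℕ} {S : Finset (Fin n ⊕ Fin n)}
    (hS : IsIndepSet (centipede n) S) : #S ≤ n := by
  rw [← card_toLeft_add_card_toRight, ← card_union_of_disjoint (isIndepSet_centipede_iff.mp hS).1]
  simpa using card_le_univ (S.toLeft ∪ S.toRight)

lemma isIndepSet_centipede_left (n : ℕ) : IsIndepSet (centipede n) (univ.map .inl) := by
  simp [IsIndepSet, centipede]

theorem indepNum_centipede (n : ℕ) : indepNum (centipede n) = n := by
  classical
  refine le_antisymm (Finset.sup_le fun S hS => ?_) ?_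
  · exact card_le_of_isIndepSet_centipede (mem_filter.mp hS).2
  · calc n = #(univ.map (Function.Embedding.inl : Fin n ↪ Fin n ⊕ Fin n)) := by simp
      _ ≤ indepNum (centipede n) :=
        le_sup (mem_filter.mpr ⟨mem_univ _, isIndepSet_centipede_left n⟩)

theorem numIndep_centipede_general {n : ℕ} :
    (∀ k ≤ n, numIndep (centipede n) k =
      ∑ j ∈ Finset.range (k + 1), Nat.choose (n - j) (n - k) * Nat.choose (n + 1 - j) j) ∧
    indepNum (centipede n) = n :=
  ⟨fun _ hk => numIndep_centipede_eq hk, indepNum_centipede n⟩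

/-- for the centipede `W_n` (`n ≥ 1`), the number of independent sets of
cardinality `k` is `s_k = Σ_{j=0}^{k} C(n-j, n-k)·C(n+1-j, j)` for `0 ≤ k ≤ n`, and
the independence number of `W_n` is `n`. -/
theorem numIndep_centipede {n : ℕ} (hn : 1 ≤ n) :
    (∀ k ≤ n, numIndep (centipede n) k =
      ∑ j ∈ Finset.range (k + 1), Nat.choose (n - j) (n - k) * Nat.choose (n + 1 - j) j) ∧
    indepNum (centipede n) = n :=
  numIndep_centipede_general
end

section
/- For the cycle graph C_n with n ≥ 2, the number of independent sets of cardinality k equals (n/(n−k))·C(n−k, k) for 0 ≤ k ≤ ⌊n/2⌋. -/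
/-!
An independent set of `C_n` is, after `Fin.val`, a subset of `range n` containing no `x` together
with `(x + 1) % n`. Those avoiding `n - 1` are the subsets of `range (n - 1)` with no two
consecutive elements; those containing `n - 1` avoid `0` and `n - 2`, and erasing `n - 1` leaves
such a subset of `Ico 1 (n - 2)`. On an interval of length `m` the same split at the top element
gives Pascal's rule, so these sets number `C(m + 1 - k, k)`. Hence the count is
`C(n - k, k) + C(n - k - 1, k - 1)`, and `(n - k) C(n - k - 1, k - 1) = k C(n - k, k)` turns
this into `n / (n - k) · C(n - k, k)`.
-/

open Finset

def separatedSubsets (s : Finset ℕ) (k : ℕ) : Finset (Finset ℕ) :=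
  {S ∈ s.powersetCard k | ∀ x ∈ S, x + 1 ∉ S}

theorem mem_separatedSubsets {s S : Finset ℕ} {k : ℕ} :
    S ∈ separatedSubsets s k ↔ S ⊆ s ∧ #S = k ∧ ∀ x ∈ S, x + 1 ∉ S := by
  simp [separatedSubsets, mem_powersetCard, and_assoc]

theorem separatedSubsets_zero (s : Finset ℕ) : separatedSubsets s 0 = {∅} := by
  ext S
  simp +contextual [mem_separatedSubsets, iff_def]

theorem filter_notMem_separatedSubsets_insert {s : Finset ℕ} {b : ℕ} (hb : b ∉ s) (k : ℕ) :
    {S ∈ separatedSubsets (insert b s) k | b ∉ S} = separatedSubsets s k := by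
  ext S
  simp only [mem_filter, mem_separatedSubsets]
  constructor
  · rintro ⟨⟨hS, hk, hsep⟩, hbS⟩
    exact ⟨(subset_insert_iff_of_notMem hbS).1 hS, hk, hsep⟩
  · rintro ⟨hS, hk, hsep⟩
    exact ⟨⟨hS.trans (subset_insert b s), hk, hsep⟩, fun h => hb (hS h)⟩

theorem card_filter_mem_separatedSubsets_insert {s : Finset ℕ} {b : ℕ} (hs : ∀ x ∈ s, x < b)
    (k : ℕ) :
    #{S ∈ separatedSubsets (insert b s) (k + 1) | b ∈ S} =
      #(separatedSubsets (s.erase (b - 1)) k) := by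
  have hb : b ∉ s := fun h => (hs b h).false
  refine card_nbij' (·.erase b) (insert b) ?_ ?_ ?_ ?_
  · intro S hS
    simp only [coe_filter, Set.mem_ofPred_eq, mem_separatedSubsets] at hS
    obtain ⟨⟨hS, hk, hsep⟩, hbS⟩ := hS
    simp only [mem_coe, mem_separatedSubsets, card_erase_of_mem hbS, hk]
    refine ⟨fun x hx => ?_, rfl, fun x hx h => hsep x (mem_of_mem_erase hx) (mem_of_mem_erase h)⟩
    obtain ⟨hxb, hxS⟩ := mem_erase.1 hx
    have hxs : x ∈ s := (mem_insert.1 (hS hxS)).resolve_left hxb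
    refine mem_erase.2 ⟨fun h => hsep x hxS ?_, hxs⟩
    rwa [show x + 1 = b by have := hs x hxs; omega]
  · intro T hT
    simp only [mem_coe, mem_separatedSubsets] at hT
    obtain ⟨hT, hk, hsep⟩ := hT
    have hbT : b ∉ T := fun h => hb (mem_of_mem_erase (hT h))
    simp only [coe_filter, Set.mem_ofPred_eq, mem_separatedSubsets, mem_insert_self, and_true,
      card_insert_of_notMem hbT, hk, true_and, mem_insert]
    refine ⟨insert_subset_insert b (hT.trans (erase_subset _ _)), ?_⟩
    rintro x (rfl | hx) (h | h)
    · omega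
    · exact (hs _ (mem_of_mem_erase (hT h))).not_ge (by omega)
    · exact (mem_erase.1 (hT hx)).1 (by omega)
    · exact hsep x hx h
  · intro S hS
    exact insert_erase (mem_filter.1 hS).2
  · intro T hT
    simp only [mem_coe, mem_separatedSubsets] at hT
    exact erase_insert fun h => hb (mem_of_mem_erase (hT.1 h))

theorem card_separatedSubsets_insert {s : Finset ℕ} {b : ℕ} (hs : ∀ x ∈ s, x < b) (k : ℕ) :
    #(separatedSubsets (insert b s) (k + 1)) =
      #(separatedSubsets s (k + 1)) + #(separatedSubsets (s.erase (b - 1)) k) := by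
  rw [← card_filter_add_card_filter_not (fun S => b ∈ S),
    card_filter_mem_separatedSubsets_insert hs,
    filter_notMem_separatedSubsets_insert fun h => (hs b h).false, add_comm]

theorem card_separatedSubsets_Ico_add (a m k : ℕ) :
    #(separatedSubsets (Ico a (a + m)) k) = (m + 1 - k).choose k := by
  induction m using Nat.twoStepInduction generalizing k with
  | zero => rcases k with _ | k <;> simp [separatedSubsets, filter_singleton]
  | one => rcases k with _ | _ | k <;> simp [separatedSubsets, powersetCard_one, filter_singleton]
  | more m ih ih' =>
    rcases k with _ | k
    · simp [separatedSubsets_zero]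
    have hIco : Ico a (a + (m + 2)) = insert (a + m + 1) (Ico a (a + (m + 1))) := by
      ext; simp only [mem_Ico, mem_insert]; omega
    have hErase : (Ico a (a + (m + 1))).erase (a + m + 1 - 1) = Ico a (a + m) := by
      ext; simp only [mem_Ico, mem_erase]; omega
    rw [hIco, card_separatedSubsets_insert (fun x hx => by rw [mem_Ico] at hx; omega), hErase,
      ih, ih']
    rcases le_or_gt k (m + 1) with hk | hk
    · rw [show m + 2 + 1 - (k + 1) = (m + 1 - k) + 1 by omega,
        show m + 1 + 1 - (k + 1) = m + 1 - k by omega, Nat.choose_succ_succ', add_comm]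
    · rw [Nat.choose_eq_zero_of_lt (by omega), Nat.choose_eq_zero_of_lt (by omega),
        Nat.choose_eq_zero_of_lt (by omega)]

theorem card_separatedSubsets_Ico (a b k : ℕ) :
    #(separatedSubsets (Ico a b) k) = (b + 1 - a - k).choose k := by
  rcases le_or_gt a b with hab | hab
  · obtain ⟨m, rfl⟩ := Nat.exists_eq_add_of_le hab
    rw [card_separatedSubsets_Ico_add, show a + m + 1 - a = m + 1 by omega]
  · have hempty := card_separatedSubsets_Ico_add a 0 k
    rw [add_zero, Ico_self] at hempty
    rw [Ico_eq_empty_of_le hab.le, hempty, show b + 1 - a = 0 by omega]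
    rcases k with _ | k <;> simp

def cyclicSeparatedSubsets (n k : ℕ) : Finset (Finset ℕ) :=
  {S ∈ (range n).powersetCard k | ∀ x ∈ S, (x + 1) % n ∉ S}

theorem mem_cyclicSeparatedSubsets {n k : ℕ} {S : Finset ℕ} :
    S ∈ cyclicSeparatedSubsets n k ↔ S ⊆ range n ∧ #S = k ∧ ∀ x ∈ S, (x + 1) % n ∉ S := by
  simp [cyclicSeparatedSubsets, mem_powersetCard, and_assoc]

theorem cyclicSeparatedSubsets_zero (n : ℕ) : cyclicSeparatedSubsets n 0 = {∅} := by
  ext S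
  simp +contextual [mem_cyclicSeparatedSubsets, iff_def]

theorem filter_notMem_cyclicSeparatedSubsets (n k : ℕ) :
    {S ∈ cyclicSeparatedSubsets n k | n - 1 ∉ S} = separatedSubsets (range (n - 1)) k := by
  ext S
  simp only [mem_filter, mem_cyclicSeparatedSubsets, mem_separatedSubsets, subset_iff, mem_range]
  constructor
  · rintro ⟨⟨hS, hk, hsep⟩, hn⟩
    have hS' : ∀ x ∈ S, x < n - 1 := fun x hx => by
      have := hS hx
      have : x ≠ n - 1 := by rintro rfl; exact hn hx
      omega
    refine ⟨fun _ hx => hS' _ hx, hk, fun x hx => ?_⟩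
    simpa [Nat.mod_eq_of_lt (show x + 1 < n by have := hS' x hx; omega)] using hsep x hx
  · rintro ⟨hS, hk, hsep⟩
    refine ⟨⟨fun _ hx => by have := hS hx; omega, hk, fun x hx => ?_⟩,
      fun h => by have := hS h; omega⟩
    simpa [Nat.mod_eq_of_lt (show x + 1 < n by have := hS hx; omega)] using hsep x hx

theorem filter_mem_cyclicSeparatedSubsets {n : ℕ} (hn : 2 ≤ n) (k : ℕ) :
    {S ∈ cyclicSeparatedSubsets n k | n - 1 ∈ S} =
      {S ∈ separatedSubsets (Ico 1 n) k | n - 1 ∈ S} := by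
  have hwrap : (n - 1 + 1) % n = 0 := by rw [Nat.sub_add_cancel (by omega), Nat.mod_self]
  ext S
  simp only [mem_filter, mem_cyclicSeparatedSubsets, mem_separatedSubsets, subset_iff, mem_range,
    mem_Ico, and_congr_left_iff]
  intro hlast
  constructor
  · rintro ⟨hS, hk, hsep⟩
    have h0 : 0 ∉ S := hwrap ▸ hsep _ hlast
    refine ⟨fun {x} hx => ⟨Nat.one_le_iff_ne_zero.2 (by rintro rfl; exact h0 hx), hS hx⟩, hk,
      fun x hx hx' => ?_⟩
    have := hS hx'
    exact hsep x hx (by rwa [Nat.mod_eq_of_lt this])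
  · rintro ⟨hS, hk, hsep⟩
    refine ⟨fun {x} hx => (hS hx).2, hk, fun x hx => ?_⟩
    rcases Nat.lt_or_ge (x + 1) n with h | h
    · rw [Nat.mod_eq_of_lt h]; exact hsep x hx
    · rw [show x = n - 1 by have := (hS hx).2; omega, hwrap]
      exact fun h0 => by have := (hS h0).1; omega

theorem card_cyclicSeparatedSubsets_succ {n : ℕ} (hn : 2 ≤ n) (k : ℕ) :
    #(cyclicSeparatedSubsets n (k + 1)) =
      (n - (k + 1)).choose (k + 1) + (n - (k + 2)).choose k := by
  have hIco : Ico 1 n = insert (n - 1) (Ico 1 (n - 1)) := by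
    ext; simp only [mem_Ico, mem_insert]; omega
  have hErase : (Ico 1 (n - 1)).erase (n - 1 - 1) = Ico 1 (n - 2) := by
    ext; simp only [mem_Ico, mem_erase]; omega
  rw [← card_filter_add_card_filter_not (fun S => n - 1 ∈ S),
    filter_notMem_cyclicSeparatedSubsets, filter_mem_cyclicSeparatedSubsets hn, hIco,
    card_filter_mem_separatedSubsets_insert (fun x hx => (mem_Ico.1 hx).2), hErase, range_eq_Ico,
    card_separatedSubsets_Ico, card_separatedSubsets_Ico, add_comm]
  congr 2 <;> omega

theorem sub_mul_card_cyclicSeparatedSubsets {n : ℕ} (hn : 2 ≤ n) (k : ℕ) :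
    (n - k) * #(cyclicSeparatedSubsets n k) = n * (n - k).choose k := by
  rcases k with _ | k
  · simp [cyclicSeparatedSubsets_zero]
  rw [card_cyclicSeparatedSubsets_succ hn]
  rcases hm : n - (k + 1) with _ | m
  · simp
  · rw [show n - (k + 2) = m by omega]
    calc (m + 1) * ((m + 1).choose (k + 1) + m.choose k)
        = (m + 1) * (m + 1).choose (k + 1) + (m + 1).choose (k + 1) * (k + 1) := by
          rw [mul_add, Nat.add_one_mul_choose_eq]
      _ = n * (m + 1).choose (k + 1) := by rw [mul_comm _ (k + 1), ← add_mul]; congr 1; omega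

theorem isIndepSet_cycleGraph_iff {m : ℕ} (S : Finset (Fin (m + 2))) :
    IsIndepSet (SimpleGraph.cycleGraph (m + 2)) S ↔ ∀ i ∈ S, i + 1 ∉ S := by
  simp only [IsIndepSet, SimpleGraph.cycleGraph_adj, sub_eq_iff_eq_add']
  constructor
  · exact fun h i hi hi' => h _ hi' i hi (.inl rfl)
  · rintro h i hi j hj (rfl | rfl)
    exacts [h j hj hi, h i hi hj]

theorem numIndep_cycleGraph_eq_card {n : ℕ} (hn : 2 ≤ n) (k : ℕ) :
    numIndep (SimpleGraph.cycleGraph n) k = #(cyclicSeparatedSubsets n k) := by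
  obtain ⟨m, rfl⟩ := Nat.exists_eq_add_of_le' hn
  classical
  rw [numIndep, cyclicSeparatedSubsets, ← Nat.Iio_eq_range, ← Fin.map_valEmbedding_univ,
    powersetCard_map, filter_map, card_map, powersetCard_eq_filter, powerset_univ, filter_filter]
  refine congrArg card (filter_congr fun S _ => (and_comm.trans (and_congr_right fun _ => ?_)))
  have hval (i : Fin (m + 2)) : (i.val + 1) % (m + 2) = (i + 1).val := by simp [Fin.val_add]
  rw [isIndepSet_cycleGraph_iff]
  simp [hval, Fin.val_inj]

/-- for the cycle `C_n` (`n ≥ 2`), the number of independent sets of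
cardinality `k` is `(n/(n-k))·C(n-k, k)` for `0 ≤ k ≤ ⌊n/2⌋`. -/
theorem numIndep_cycleGraph {n : ℕ} (hn : 2 ≤ n) :
    ∀ k ≤ n / 2,
      (numIndep (SimpleGraph.cycleGraph n) k : ℚ) =
        (n : ℚ) / ((n - k : ℕ) : ℚ) * Nat.choose (n - k) k := by
  intro k hk
  have hsub : ((n - k : ℕ) : ℚ) ≠ 0 := by norm_cast; omega
  rw [div_mul_eq_mul_div, eq_div_iff hsub, numIndep_cycleGraph_eq_card hn, mul_comm]
  exact_mod_cast sub_mul_card_cyclicSeparatedSubsets hn k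
end
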